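/- arXiv:1910.00342 — 6 statements merged into one kernel-verified Lean document; each statement's English description precedes it below -/
import Mathlib

section
/- Let r(k,k') = 4 sin(πk) sin(π(k−k')) sin(π(2k−k')) for k, k' ∈ 𝕋. Then for every k ∈ 𝕋, ∫_𝕋 r(k,k')² dk' = sin²(2πk) + 2 sin²(πk). -/
open MeasureTheory Set Real

noncomputable section

/-- The unit torus `𝕋`, modeled as the interval `(-1/2, 1/2]` with Lebesgue measure
(total mass `1`). -/
def torusK : Set ℝ := Ioc (-(1:ℝ)/2) (1/2)

/-- The scattering amplitude `r(k,k') = 4 sin(πk) sin(π(k−k')) sin(π(2k−k'))`. -/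
def rscat (k k' : ℝ) : ℝ :=
  4 * Real.sin (π * k) * Real.sin (π * (k - k')) * Real.sin (π * (2 * k - k'))

lemma rscat_sq_eq (k x : ℝ) :
    (rscat k x) ^ 2 = 4 * Real.sin (π*k)^2 *
      (1 + Real.cos (2*π*k)/2 - Real.cos (2*π*(k-x)) - Real.cos (2*π*(2*k-x))
        + Real.cos (2*π*(3*k-2*x))/2) := by
  have e1 : π*(2*k-x) = π*k + π*(k-x) := by ring
  have e2 : 2*π*k = π*k + π*k := by ring
  have e3 : 2*π*(k-x) = π*(k-x) + π*(k-x) := by ring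
  have e4 : 2*π*(2*k-x) = (π*k + π*(k-x)) + (π*k + π*(k-x)) := by ring
  have e5 : 2*π*(3*k-2*x) = ((π*k + π*(k-x)) + (π*k + π*(k-x))) + (π*(k-x) + π*(k-x)) := by ring
  rw [rscat, e1, e2, e3, e4, e5]
  simp only [Real.sin_add, Real.cos_add]
  set sa := Real.sin (π*k)
  set ca := Real.cos (π*k)
  set sc := Real.sin (π*(k-x))
  set cc := Real.cos (π*(k-x))
  have pa : sa^2 + ca^2 = 1 := Real.sin_sq_add_cos_sq (π*k)
  have pc : sc^2 + cc^2 = 1 := Real.sin_sq_add_cos_sq (π*(k-x))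
  linear_combination (sa^2 * (-2 + 4*cc^2 - 2*cc^4 - 4*sc^2 + 12*sc^2*cc^2 + 14*sc^4)) * pa
    + (sa^2*(6 - 2*cc^2 + 14*sc^2) + 16*sa^3*ca*sc*cc + sa^4*(-4 + 4*cc^2 - 12*sc^2)) * pc

/-- The total scattering rate:
`∫_𝕋 r(k,k')² dk' = sin²(2πk) + 2 sin²(πk)` for every `k ∈ 𝕋`. -/
theorem total_scattering_rate (k : ℝ) :
    ∫ k' in torusK, (rscat k k') ^ 2
      = Real.sin (2 * π * k) ^ 2 + 2 * Real.sin (π * k) ^ 2 := by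
  have hle : (-(1:ℝ)/2) ≤ 1/2 := by norm_num
  have hset : (∫ k' in torusK, (rscat k k') ^ 2)
      = ∫ x in (-(1:ℝ)/2)..(1/2), (rscat k x) ^ 2 :=
    (intervalIntegral.integral_of_le hle).symm
  rw [hset]
  set F : ℝ → ℝ := fun x => 4 * Real.sin (π*k)^2 *
    ((1 + Real.cos (2*π*k)/2) * x + Real.sin (2*π*(k-x))/(2*π)
      + Real.sin (2*π*(2*k-x))/(2*π) - Real.sin (2*π*(3*k-2*x))/(8*π)) with hF
  have hcont : Continuous fun x => (rscat k x) ^ 2 := by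
    unfold rscat; fun_prop
  have hderiv : ∀ x ∈ Set.uIcc (-(1:ℝ)/2) (1/2), HasDerivAt F ((rscat k x) ^ 2) x := by
    intro x _
    have l1 : HasDerivAt (fun x : ℝ => 2*π*(k-x)) (-(2*π)) x := by
      simpa using ((hasDerivAt_const x k).sub (hasDerivAt_id x)).const_mul (2*π)
    have l2 : HasDerivAt (fun x : ℝ => 2*π*(2*k-x)) (-(2*π)) x := by
      simpa using ((hasDerivAt_const x (2*k)).sub (hasDerivAt_id x)).const_mul (2*π)
    have l3 : HasDerivAt (fun x : ℝ => 2*π*(3*k-2*x)) (-(4*π)) x := by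
      have : HasDerivAt (fun x : ℝ => 3*k - 2*x) (-2) x := by
        exact (((hasDerivAt_id' x).const_mul 2).const_sub (3*k)).congr_deriv (by ring)
      refine (this.const_mul (2*π)).congr_deriv ?_
      ring
    have hlin : HasDerivAt (fun x : ℝ => (1 + Real.cos (2*π*k)/2) * x)
        (1 + Real.cos (2*π*k)/2) x := by
      simpa using (hasDerivAt_id x).const_mul (1 + Real.cos (2*π*k)/2)
    have hsum := (((hlin.add (l1.sin.div_const (2*π))).add
        (l2.sin.div_const (2*π))).sub (l3.sin.div_const (8*π))).const_mul
        (4 * Real.sin (π*k)^2)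
    have hval : 4 * Real.sin (π*k)^2 *
        ((1 + Real.cos (2*π*k)/2) + Real.cos (2*π*(k-x)) * (-(2*π)) / (2*π)
          + Real.cos (2*π*(2*k-x)) * (-(2*π)) / (2*π)
          - Real.cos (2*π*(3*k-2*x)) * (-(4*π)) / (8*π)) = (rscat k x) ^ 2 := by
      rw [rscat_sq_eq]
      have hπ : (π:ℝ) ≠ 0 := Real.pi_ne_zero
      field_simp
      ring
    rw [hF]
    exact hval ▸ hsum
  rw [intervalIntegral.integral_eq_sub_of_hasDerivAt hderiv (hcont.intervalIntegrable _ _)]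
  have a1 : 2*π*(k-(1:ℝ)/2) = 2*π*k - π := by ring
  have a2 : 2*π*(2*k-(1:ℝ)/2) = 2*(2*(π*k)) - π := by ring
  have a3 : 2*π*(3*k-2*((1:ℝ)/2)) = 2*(π*(3*k)) - 2*π := by ring
  have b1 : 2*π*(k-(-(1:ℝ)/2)) = 2*π*k + π := by ring
  have b2 : 2*π*(2*k-(-(1:ℝ)/2)) = 2*(2*(π*k)) + π := by ring
  have b3 : 2*π*(3*k-2*(-(1:ℝ)/2)) = 2*(π*(3*k)) + 2*π := by ring
  rw [hF]
  simp only [a1, a2, a3, b1, b2, b3, Real.sin_sub, Real.sin_add, Real.sin_pi, Real.cos_pi,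
    Real.sin_two_pi, Real.cos_two_pi]
  have h2 : Real.sin (2*π*k) = 2 * Real.sin (π*k) * Real.cos (π*k) := by
    rw [show 2*π*k = 2*(π*k) by ring, Real.sin_two_mul]
  have h3 : Real.cos (2*π*k) = 2 * Real.cos (π*k)^2 - 1 := by
    rw [show 2*π*k = 2*(π*k) by ring, Real.cos_two_mul]
  rw [h2, h3]
  have pa : Real.sin (π*k)^2 + Real.cos (π*k)^2 = 1 := Real.sin_sq_add_cos_sq (π*k)
  ring_nf
end
end

section
/- Let r(k,k') = 4 sin(πk) sin(π(k−k')) sin(π(2k−k')) and define the symmetrized scattering kernel R(k,k') := ½[ r(k, k−k')² + r(k, k+k')² ] for k, k' ∈ 𝕋. Then for all k, k' ∈ 𝕋: (i) R(k,k') = 16 sin²(πk) sin²(πk') [ sin²(πk) cos²(πk') + sin²(πk') cos²(πk) ]; (ii) R(k,k') = R(k',k); and (iii) ∫_𝕋 R(k,k') dk' = sin²(2πk) + 2 sin²(πk). -/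
/-! Substituting `k ± k'` into `r` turns `R(k,k')` into a polynomial in `sin πk, cos πk, sin πk',
cos πk'`, which is the product formula (i); (ii) is read off from it. Writing `cos² = 1 - sin²`,
the integral (iii) reduces to the Wallis integrals `∫_𝕋 sin² πx = 1/2` and `∫_𝕋 sin⁴ πx = 3/8`,
which come from `∫₀^π sin^(2n)` since `sin^(2n) πx` has period `1`. -/

open MeasureTheory Set Real

noncomputable section

/-- The symmetrized scattering kernel `R(k,k') = ½[r(k,k−k')² + r(k,k+k')²]`. -/
def Rker (k k' : ℝ) : ℝ := ((rscat k (k - k')) ^ 2 + (rscat k (k + k')) ^ 2) / 2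

theorem Rker_eq (k k' : ℝ) : Rker k k'
    = 16 * sin (π * k) ^ 2 * sin (π * k') ^ 2 *
        (sin (π * k) ^ 2 * cos (π * k') ^ 2 + sin (π * k') ^ 2 * cos (π * k) ^ 2) := by
  have h₁ : rscat k (k - k') = 4 * sin (π * k) * sin (π * k') * sin (π * k + π * k') := by
    simp only [rscat]; ring_nf
  have h₂ : rscat k (k + k') = 4 * sin (π * k) * sin (-(π * k')) * sin (π * k - π * k') := by
    simp only [rscat]; ring_nf
  rw [Rker, h₁, h₂, sin_add, sin_sub, sin_neg]
  ring

theorem Rker_comm (k k' : ℝ) : Rker k k' = Rker k' k := by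
  rw [Rker_eq, Rker_eq]
  ring

theorem integral_torusK_eq_intervalIntegral {E : Type*} [NormedAddCommGroup E] [NormedSpace ℝ E]
    (f : ℝ → E) :
    ∫ x in torusK, f x = ∫ x in (-1 / 2 : ℝ)..1 / 2, f x := by
  rw [intervalIntegral.integral_of_le (by norm_num)]
  rfl

theorem integral_torusK_sin_pi_mul_pow_even (n : ℕ) :
    ∫ x in torusK, sin (π * x) ^ (2 * n) = ∏ i ∈ Finset.range n, (2 * (i : ℝ) + 1) / (2 * i + 2) := by
  have hper : Function.Periodic (fun x => sin (π * x) ^ (2 * n)) 1 := fun x => by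
    simp only [mul_add, mul_one, sin_add_pi, pow_mul, neg_sq]
  calc ∫ x in torusK, sin (π * x) ^ (2 * n)
      = ∫ x in (0 : ℝ)..0 + 1, sin (π * x) ^ (2 * n) := by
        rw [integral_torusK_eq_intervalIntegral, ← hper.intervalIntegral_add_eq (-1 / 2) 0]
        norm_num
    _ = π⁻¹ * ∫ x in (0 : ℝ)..π, sin x ^ (2 * n) := by
        rw [intervalIntegral.integral_comp_mul_left (fun x => sin x ^ (2 * n)) pi_ne_zero,
          smul_eq_mul, mul_zero, zero_add, mul_one]
    _ = _ := by
        rw [integral_sin_pow_even, inv_mul_cancel_left₀ pi_ne_zero]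

/-- Properties of the symmetrized scattering kernel: the explicit
product formula, symmetry, and the value of the total scattering kernel. -/
theorem symmetrized_scattering_kernel :
    (∀ k k' : ℝ, Rker k k'
        = 16 * Real.sin (π * k) ^ 2 * Real.sin (π * k') ^ 2 *
            (Real.sin (π * k) ^ 2 * Real.cos (π * k') ^ 2
              + Real.sin (π * k') ^ 2 * Real.cos (π * k) ^ 2)) ∧
    (∀ k k' : ℝ, Rker k k' = Rker k' k) ∧
    (∀ k : ℝ, ∫ k' in torusK, Rker k k'
        = Real.sin (2 * π * k) ^ 2 + 2 * Real.sin (π * k) ^ 2) := by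
  refine ⟨Rker_eq, Rker_comm, fun k => ?_⟩
  rw [mul_assoc 2 π k, sin_two_mul]
  set s := sin (π * k)
  set c := cos (π * k)
  have hR : (fun k' => Rker k k') = fun k' =>
      16 * s ^ 4 * sin (π * k') ^ (2 * 1) + 16 * s ^ 2 * (c ^ 2 - s ^ 2) * sin (π * k') ^ (2 * 2) := by
    funext k'
    rw [Rker_eq, cos_sq' (π * k')]
    ring
  have hint (n : ℕ) (a : ℝ) : IntegrableOn (fun x => a * sin (π * x) ^ (2 * n)) torusK :=
    (by fun_prop : Continuous fun x => a * sin (π * x) ^ (2 * n)).integrableOn_Ioc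
  rw [hR, integral_add (hint 1 _) (hint 2 _), integral_const_mul, integral_const_mul,
    integral_torusK_sin_pi_mul_pow_even, integral_torusK_sin_pi_mul_pow_even]
  simp only [Finset.prod_range_succ, Finset.prod_range_zero, Nat.cast_zero, Nat.cast_one]
  linear_combination 2 * s ^ 2 * sin_sq_add_cos_sq (π * k)
end
end

section
/- Fix γ₀ > 0, let ω̄' : 𝕋 → ℝ be an odd bounded measurable function, R : 𝕋 → [0,∞) even bounded measurable, and p₊, p₋ : 𝕋 → [0,∞) even measurable functions with p₊(k) + p₋(k) ≤ 1 for all k. For W₀ : ℝ×𝕋 → ℝ measurable define (𝔚^un_t W₀)(y,k) = e^{−2γ₀R(k)t}[ W₀(y − ω̄'(k)t, k)·1{y ∉ I(k,t)} + p₊(k) W₀(y − ω̄'(k)t, k)·1{y ∈ I(k,t)} + p₋(k) W₀(−y + ω̄'(k)t, −k)·1{y ∈ I(k,t)} ], where I(k,t) is the closed interval with endpoints 0 and ω̄'(k)t. Then for every p ∈ [1,∞], each 𝔚^un_t is a bounded linear operator on L^p(ℝ×𝕋) with ‖𝔚^un_t W₀‖_{L^p} ≤ ‖W₀‖_{L^p}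 for all t ≥ 0, and the family is a semigroup: 𝔚^un_{t+s} W₀ = 𝔚^un_t (𝔚^un_s W₀) almost everywhere, for all s, t ≥ 0. -/
open MeasureTheory Set Filter
open scoped ENNReal

noncomputable section

open scoped Classical

/-- The measure of `ℝ × 𝕋`: Lebesgue measure on `ℝ` times the (normalized) Lebesgue
measure on the torus. -/
def μYK : Measure (ℝ × ℝ) := (volume : Measure ℝ).prod (volume.restrict torusK)

/-- The damped-transport interface evolution
`(𝔚^un_t W₀)(y,k) = e^{−2γ₀R(k)t}[ W₀(y − ω̄'(k)t, k)·1{y ∉ I(k,t)}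
  + p₊(k) W₀(y − ω̄'(k)t, k)·1{y ∈ I(k,t)} + p₋(k) W₀(−y + ω̄'(k)t, −k)·1{y ∈ I(k,t)} ]`,
where `I(k,t)` is the closed interval with endpoints `0` and `ω̄'(k)t`. -/
def WunF (γ₀ : ℝ) (ωb R pp pm : ℝ → ℝ) (W₀ : ℝ → ℝ → ℝ) (t y k : ℝ) : ℝ :=
  Real.exp (-(2 * γ₀ * R k * t)) *
    (if y ∈ uIcc (0:ℝ) (ωb k * t) then
        pp k * W₀ (y - ωb k * t) k + pm k * W₀ (-y + ωb k * t) (-k)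
      else W₀ (y - ωb k * t) k)


/-!
For each `k` the operator transports `W₀` with speed `ω̄'(k)`; on the swept interval `I(k,t)` a
fraction `p₊` is transmitted and `p₋` is reflected to `(-y, -k)`. Both pieces are `W₀` composed with
measure-preserving maps of `ℝ × 𝕋`, the shear `(y, k) ↦ (y - ω̄'(k)t, k)` and the reflection
`(y, k) ↦ (ω̄'(k)t - y, -k)`, and since `ω̄'` is odd and `p₋` even both pull `I(k,t)` back to the
same set, on which the weights add up to `p₊ + p₋ ≤ 1`. Convexity of `x ↦ x ^ p` then gives the
`L^p` contraction, and the case `p = ∞` is immediate.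

Since `ω̄'(k)t` and `ω̄'(k)s` have the same sign, `I(k,t+s)` is the union of `I(k,t)` and its
translate by `ω̄'(k)t`, which meet only on the null graph `y = ω̄'(k)t`; away from it, mass
reflected during the first time span never meets the interface again, which is the semigroup law.
-/

open scoped Interval

section MeasurePreserving

variable {α β : Type*} [MeasurableSpace α] [MeasurableSpace β]

theorem measurePreserving_fiberwise_prod {μ : Measure α} {ν : Measure β} [SFinite μ] [SFinite ν]
    {f : β → α → α} (hf : Measurable (Function.uncurry f))
    (hμ : ∀ b, MeasurePreserving (f b) μ μ) :
    MeasurePreserving (fun q : α × β => (f q.2 q.1, q.2)) (μ.prod ν) (μ.prod ν) :=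
  (Measure.measurePreserving_swap.comp ((MeasurePreserving.id ν).skew_product hf
    (ae_of_all _ fun b => (hμ b).map_eq))).comp Measure.measurePreserving_swap

theorem lintegral_comp_add_comp_le {μ : Measure α} {T₁ T₂ : α → α}
    (h₁ : MeasurePreserving T₁ μ μ) (h₂ : MeasurePreserving T₂ μ μ) {w₁ w₂ Φ : α → ℝ≥0∞}
    (hw₁ : Measurable w₁) (hw₂ : Measurable w₂) (hΦ : AEMeasurable Φ μ)
    (hw : ∀ x, w₁ x + w₂ x ≤ 1) :
    ∫⁻ x, (w₁ (T₁ x) * Φ (T₁ x) + w₂ (T₂ x) * Φ (T₂ x)) ∂μ ≤ ∫⁻ x, Φ x ∂μ := by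
  have hcomp : ∀ {T : α → α}, MeasurePreserving T μ μ → ∀ {w : α → ℝ≥0∞}, Measurable w →
      ∫⁻ x, w (T x) * Φ (T x) ∂μ = ∫⁻ x, w x * Φ x ∂μ := fun hT w hw => by
    have h := lintegral_comp' (f := fun x => w x * Φ x)
      (by rw [hT.map_eq]; exact hw.aemeasurable.mul hΦ) hT.aemeasurable
    rwa [hT.map_eq] at h
  calc ∫⁻ x, (w₁ (T₁ x) * Φ (T₁ x) + w₂ (T₂ x) * Φ (T₂ x)) ∂μ
      = ∫⁻ x, w₁ x * Φ x ∂μ + ∫⁻ x, w₂ x * Φ x ∂μ := by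
        rw [lintegral_add_left' (f := fun x => w₁ (T₁ x) * Φ (T₁ x))
          ((hw₁.comp h₁.measurable).aemeasurable.mul
            (hΦ.comp_quasiMeasurePreserving h₁.quasiMeasurePreserving)),
          hcomp h₁ hw₁, hcomp h₂ hw₂]
    _ = ∫⁻ x, (w₁ x + w₂ x) * Φ x ∂μ := by
        simp_rw [add_mul]
        exact (lintegral_add_left' (hw₁.aemeasurable.mul hΦ) _).symm
    _ ≤ ∫⁻ x, Φ x ∂μ := lintegral_mono fun x => mul_le_of_le_one_left' (hw x)

theorem ENNReal.rpow_mul_add_mul_le_of_add_le_one {w₁ w₂ : ℝ≥0∞} (a b : ℝ≥0∞)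
    (hw : w₁ + w₂ ≤ 1) {r : ℝ} (hr : 1 ≤ r) : (w₁ * a + w₂ * b) ^ r ≤ w₁ * a ^ r + w₂ * b ^ r := by
  -- Jensen for the three weights `w₁, w₂, 1 - w₁ - w₂`, the last one at the point `0`.
  have h := ENNReal.rpow_arith_mean_le_arith_mean_rpow Finset.univ ![w₁, w₂, 1 - (w₁ + w₂)]
    ![a, b, 0] (by simp [Fin.sum_univ_three, add_tsub_cancel_of_le hw]) hr
  simpa [Fin.sum_univ_three, ENNReal.zero_rpow_of_pos (zero_lt_one.trans_le hr)] using h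

theorem eLpNorm_le_of_enorm_le_comp_add_comp {E F : Type*} [NormedAddCommGroup E]
    [NormedAddCommGroup F] {μ : Measure α} {p : ℝ≥0∞} (hp : 1 ≤ p) {T₁ T₂ : α → α}
    (h₁ : MeasurePreserving T₁ μ μ) (h₂ : MeasurePreserving T₂ μ μ) {w₁ w₂ : α → ℝ≥0∞}
    (hw₁ : Measurable w₁) (hw₂ : Measurable w₂) (hw : ∀ x, w₁ x + w₂ x ≤ 1)
    (hwT : ∀ x, w₁ (T₁ x) + w₂ (T₂ x) ≤ 1) {f : α → E} {g : α → F}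
    (hg : AEStronglyMeasurable g μ)
    (hf : ∀ x, ‖f x‖ₑ ≤ w₁ (T₁ x) * ‖g (T₁ x)‖ₑ + w₂ (T₂ x) * ‖g (T₂ x)‖ₑ) :
    eLpNorm f p μ ≤ eLpNorm g p μ := by
  rcases eq_or_ne p ⊤ with rfl | hp_top
  · rw [eLpNorm_exponent_top, eLpNorm_exponent_top]
    set M := eLpNormEssSup g μ
    have hgM := enorm_ae_le_eLpNormEssSup g μ
    refine essSup_le_of_ae_le M ?_
    filter_upwards [h₁.quasiMeasurePreserving.ae hgM, h₂.quasiMeasurePreserving.ae hgM]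
      with x h₁x h₂x
    calc ‖f x‖ₑ ≤ w₁ (T₁ x) * ‖g (T₁ x)‖ₑ + w₂ (T₂ x) * ‖g (T₂ x)‖ₑ := hf x
      _ ≤ (w₁ (T₁ x) + w₂ (T₂ x)) * M := by rw [add_mul]; gcongr
      _ ≤ M := mul_le_of_le_one_left' (hwT x)
  · have hp0 : p ≠ 0 := (zero_lt_one.trans_le hp).ne'
    have hr : 1 ≤ p.toReal := by simpa using ENNReal.toReal_mono hp_top hp
    rw [eLpNorm_eq_lintegral_rpow_enorm_toReal hp0 hp_top,
      eLpNorm_eq_lintegral_rpow_enorm_toReal hp0 hp_top]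
    refine ENNReal.rpow_le_rpow ?_ (by positivity)
    calc ∫⁻ x, ‖f x‖ₑ ^ p.toReal ∂μ
        ≤ ∫⁻ x, (w₁ (T₁ x) * ‖g (T₁ x)‖ₑ ^ p.toReal + w₂ (T₂ x) * ‖g (T₂ x)‖ₑ ^ p.toReal) ∂μ :=
          lintegral_mono fun x => (ENNReal.rpow_le_rpow (hf x) (by linarith)).trans
            (ENNReal.rpow_mul_add_mul_le_of_add_le_one _ _ (hwT x) hr)
      _ ≤ ∫⁻ x, ‖g x‖ₑ ^ p.toReal ∂μ :=
          lintegral_comp_add_comp_le h₁ h₂ hw₁ hw₂ (hg.enorm.pow_const _) hw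

end MeasurePreserving

theorem measurePreserving_neg_restrict_Ioc (a : ℝ) :
    MeasurePreserving Neg.neg (volume.restrict (Ioc (-a) a)) (volume.restrict (Ioc (-a) a)) := by
  have h := (Measure.measurePreserving_neg (volume : Measure ℝ)).restrict_preimage
    (measurableSet_Ioc (a := -a) (b := a))
  rwa [show Neg.neg ⁻¹' Ioc (-a) a = -Ioc (-a) a from rfl, Set.neg_Ioc, neg_neg,
    Measure.restrict_congr_set Ico_ae_eq_Ioc] at h

theorem measurePreserving_neg_torusK :
    MeasurePreserving Neg.neg (volume.restrict torusK) (volume.restrict torusK) := by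
  simpa only [torusK, neg_div] using measurePreserving_neg_restrict_Ioc (1 / 2)

section Transport

variable {β : Type*} [MeasurableSpace β] {c : β → ℝ}

theorem measurePreserving_sub_shear {ν : Measure β} [SFinite ν] (hc : Measurable c) :
    MeasurePreserving (fun q : ℝ × β => (q.1 - c q.2, q.2)) (volume.prod ν) (volume.prod ν) :=
  measurePreserving_fiberwise_prod (f := fun k y => y - c k) (by fun_prop)
    fun k => measurePreserving_sub_right volume (c k)

theorem measure_graph_eq_zero {μ : Measure ℝ} [NullSingletonClass μ] [SFinite μ]
    {ν : Measure β} [SFinite ν] (hc : Measurable c) : (μ.prod ν) {q : ℝ × β | q.1 = c q.2} = 0 := by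
  rw [Measure.prod_apply_symm (measurableSet_eq_fun (g := fun q : ℝ × β => c q.2) measurable_fst
    (hc.comp measurable_snd))]
  simp

end Transport

theorem measurePreserving_reflection {c : ℝ → ℝ} (hc : Measurable c) :
    MeasurePreserving (fun q : ℝ × ℝ => (c q.2 - q.1, -q.2)) μYK μYK :=
  ((MeasurePreserving.id volume).prod measurePreserving_neg_torusK).comp
    (measurePreserving_fiberwise_prod (f := fun k y => c k - y) (by fun_prop)
      fun k => Measure.measurePreserving_sub_left volume (c k))

theorem measurableSet_mem_uIcc {α : Type*} [MeasurableSpace α] {u v w : α → ℝ}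
    (hu : Measurable u) (hv : Measurable v) (hw : Measurable w) :
    MeasurableSet {x | u x ∈ [[v x, w x]]} := by
  simp only [uIcc, mem_Icc, ofPred_and]
  exact (measurableSet_le (hv.min hw) hu).inter (measurableSet_le hu (hv.max hw))

section Intervals

variable {a b y : ℝ}

theorem sub_mem_uIcc_zero_neg_iff : y - a ∈ [[0, -a]] ↔ y ∈ [[0, a]] := by
  simp only [mem_uIcc]; grind

theorem self_sub_mem_uIcc_zero_iff : a - y ∈ [[0, a]] ↔ y ∈ [[0, a]] := by
  simp only [mem_uIcc]; grind

theorem neg_add_mem_uIcc_zero_neg_iff : -y + a ∈ [[0, -b]] ↔ y - a ∈ [[0, b]] := by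
  simp only [mem_uIcc]; grind

theorem mem_uIcc_zero_add_iff (hab : 0 ≤ a * b) :
    y ∈ [[0, a + b]] ↔ y ∈ [[0, a]] ∨ y - a ∈ [[0, b]] := by
  simp only [mem_uIcc]
  rcases mul_nonneg_iff.1 hab with ⟨ha, hb⟩ | ⟨ha, hb⟩ <;> grind

theorem eq_of_mem_uIcc_zero_of_sub_mem_uIcc_zero (hab : 0 ≤ a * b) (hy : y ∈ [[0, a]])
    (hya : y - a ∈ [[0, b]]) : y = a := by
  simp only [mem_uIcc] at hy hya
  rcases mul_nonneg_iff.1 hab with ⟨ha, hb⟩ | ⟨ha, hb⟩ <;> grind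

end Intervals

section WunF

variable {γ₀ : ℝ} {ωb R pp pm : ℝ → ℝ} {W₀ : ℝ → ℝ → ℝ} {s t y k : ℝ}

theorem WunF_mul_add_mul (W₁ W₂ : ℝ → ℝ → ℝ) (a b : ℝ) :
    WunF γ₀ ωb R pp pm (fun y' k' => a * W₁ y' k' + b * W₂ y' k') t y k
      = a * WunF γ₀ ωb R pp pm W₁ t y k + b * WunF γ₀ ωb R pp pm W₂ t y k := by
  unfold WunF
  split_ifs <;> ring

theorem enorm_WunF_le (hγ₀ : 0 ≤ γ₀) (hR : 0 ≤ R k) (ht : 0 ≤ t) :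
    ‖WunF γ₀ ωb R pp pm W₀ t y k‖ₑ
      ≤ (if y ∈ [[0, ωb k * t]] then ‖pp k‖ₑ else 1) * ‖W₀ (y - ωb k * t) k‖ₑ
        + (if y ∈ [[0, ωb k * t]] then ‖pm k‖ₑ else 0) * ‖W₀ (ωb k * t - y) (-k)‖ₑ := by
  have hexp : ‖Real.exp (-(2 * γ₀ * R k * t))‖ₑ ≤ 1 := by
    rw [Real.enorm_eq_ofReal (Real.exp_nonneg _), ENNReal.ofReal_le_one, Real.exp_le_one_iff,
      neg_nonpos]
    positivity
  rw [WunF, enorm_mul]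
  refine mul_le_of_le_one_left' hexp |>.trans ?_
  split_ifs
  · rw [neg_add_eq_sub, ← enorm_mul, ← enorm_mul]
    exact enorm_add_le _ _
  · simp

theorem enorm_add_enorm_le_one {a b : ℝ} (ha : 0 ≤ a) (hb : 0 ≤ b) (hab : a + b ≤ 1) :
    ‖a‖ₑ + ‖b‖ₑ ≤ 1 := by
  rw [Real.enorm_eq_ofReal ha, Real.enorm_eq_ofReal hb, ← ENNReal.ofReal_add ha hb]
  exact ENNReal.ofReal_le_one.2 hab

theorem eLpNorm_WunF_le (hγ₀ : 0 ≤ γ₀) (hωbm : Measurable ωb) (hωbodd : ∀ k, ωb (-k) = -ωb k)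
    (hRnn : ∀ k, 0 ≤ R k) (hppm : Measurable pp) (hpmm : Measurable pm)
    (hpmev : ∀ k, pm (-k) = pm k) (hppnn : ∀ k, 0 ≤ pp k) (hpmnn : ∀ k, 0 ≤ pm k)
    (hple : ∀ k, pp k + pm k ≤ 1) (hW : AEStronglyMeasurable (Function.uncurry W₀) μYK)
    (ht : 0 ≤ t) {p : ℝ≥0∞} (hp : 1 ≤ p) :
    eLpNorm (fun q : ℝ × ℝ => WunF γ₀ ωb R pp pm W₀ t q.1 q.2) p μYK
      ≤ eLpNorm (Function.uncurry W₀) p μYK := by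
  set c : ℝ → ℝ := fun k => ωb k * t
  have hc : Measurable c := hωbm.mul_const t
  set w₁ : ℝ × ℝ → ℝ≥0∞ := fun q => if q.1 ∈ [[0, -c q.2]] then ‖pp q.2‖ₑ else 1
  set w₂ : ℝ × ℝ → ℝ≥0∞ := fun q => if q.1 ∈ [[0, -c q.2]] then ‖pm q.2‖ₑ else 0
  have hJ : MeasurableSet {q : ℝ × ℝ | q.1 ∈ [[0, -c q.2]]} :=
    measurableSet_mem_uIcc measurable_fst measurable_const (hc.comp measurable_snd).neg
  have hw₁T : ∀ q : ℝ × ℝ, w₁ (q.1 - c q.2, q.2)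
      = if q.1 ∈ [[0, c q.2]] then ‖pp q.2‖ₑ else 1 := fun q => by
    simp only [w₁, sub_mem_uIcc_zero_neg_iff]
  have hw₂T : ∀ q : ℝ × ℝ, w₂ (c q.2 - q.1, -q.2)
      = if q.1 ∈ [[0, c q.2]] then ‖pm q.2‖ₑ else 0 := fun q => by
    simp only [w₂, c, hωbodd, neg_mul, neg_neg, self_sub_mem_uIcc_zero_iff, hpmev]
  have hsum : ∀ k, ‖pp k‖ₑ + ‖pm k‖ₑ ≤ 1 := fun k =>
    enorm_add_enorm_le_one (hppnn k) (hpmnn k) (hple k)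
  have hw : ∀ q, w₁ q + w₂ q ≤ 1 := fun q => by
    simp only [w₁, w₂]
    split_ifs <;> simp [hsum]
  have hwT : ∀ q : ℝ × ℝ, w₁ (q.1 - c q.2, q.2) + w₂ (c q.2 - q.1, -q.2) ≤ 1 := fun q => by
    rw [hw₁T, hw₂T]
    split_ifs <;> simp [hsum]
  refine eLpNorm_le_of_enorm_le_comp_add_comp hp (measurePreserving_sub_shear hc)
    (measurePreserving_reflection hc) (w₁ := w₁) (w₂ := w₂)
    (Measurable.ite hJ (hppm.comp measurable_snd).enorm measurable_const)
    (Measurable.ite hJ (hpmm.comp measurable_snd).enorm measurable_const) hw hwT hW fun q => ?_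
  rw [hw₁T, hw₂T]
  exact enorm_WunF_le hγ₀ (hRnn _) ht

theorem WunF_add_eq_WunF_WunF (hωbodd : ∀ k, ωb (-k) = -ωb k) (hRev : ∀ k, R (-k) = R k)
    (hs : 0 ≤ s) (ht : 0 ≤ t) (hy : y ≠ ωb k * t) :
    WunF γ₀ ωb R pp pm W₀ (t + s) y k
      = WunF γ₀ ωb R pp pm (fun y' k' => WunF γ₀ ωb R pp pm W₀ s y' k') t y k := by
  have hexp : Real.exp (-(2 * γ₀ * R k * (t + s)))
      = Real.exp (-(2 * γ₀ * R k * t)) * Real.exp (-(2 * γ₀ * R k * s)) := by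
    rw [← Real.exp_add]
    ring_nf
  simp only [WunF, hexp, hωbodd, hRev, neg_mul, neg_add_mem_uIcc_zero_neg_iff]
  rw [mul_add]
  set a := ωb k * t
  set b := ωb k * s
  have hab : 0 ≤ a * b := by
    rw [show a * b = ωb k ^ 2 * (t * s) by ring]
    positivity
  by_cases ha : y ∈ [[0, a]]
  · have hb : y - a ∉ [[0, b]] := fun hb =>
      hy (eq_of_mem_uIcc_zero_of_sub_mem_uIcc_zero hab ha hb)
    rw [if_pos ((mem_uIcc_zero_add_iff hab).2 (Or.inl ha)), if_pos ha, if_neg hb, if_neg hb]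
    ring_nf
  · by_cases hb : y - a ∈ [[0, b]]
    · rw [if_pos ((mem_uIcc_zero_add_iff hab).2 (Or.inr hb)), if_neg ha, if_pos hb]
      ring_nf
    · have hab' : y ∉ [[0, a + b]] := by
        rw [mem_uIcc_zero_add_iff hab, not_or]
        exact ⟨ha, hb⟩
      rw [if_neg hab', if_neg ha, if_neg hb]
      ring_nf

theorem ae_WunF_add_eq_WunF_WunF (hωbm : Measurable ωb) (hωbodd : ∀ k, ωb (-k) = -ωb k)
    (hRev : ∀ k, R (-k) = R k) (hs : 0 ≤ s) (ht : 0 ≤ t) :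
    ∀ᵐ q ∂μYK, WunF γ₀ ωb R pp pm W₀ (t + s) q.1 q.2
      = WunF γ₀ ωb R pp pm (fun y k => WunF γ₀ ωb R pp pm W₀ s y k) t q.1 q.2 := by
  have hgraph : μYK {q : ℝ × ℝ | q.1 = ωb q.2 * t} = 0 := measure_graph_eq_zero (hωbm.mul_const t)
  filter_upwards [measure_eq_zero_iff_ae_notMem.1 hgraph] with q hq
  exact WunF_add_eq_WunF_WunF hωbodd hRev hs ht hq

end WunF

theorem Wun_lp_contraction_semigroup_general
    (γ₀ : ℝ) (hγ₀ : 0 < γ₀)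
    (ωb : ℝ → ℝ) (hωbm : Measurable ωb) (hωbodd : ∀ k, ωb (-k) = -ωb k)
    (R : ℝ → ℝ) (hRev : ∀ k, R (-k) = R k) (hRnn : ∀ k, 0 ≤ R k)
    (pp pm : ℝ → ℝ) (hppm : Measurable pp) (hpmm : Measurable pm)
    (hpmev : ∀ k, pm (-k) = pm k)
    (hppnn : ∀ k, 0 ≤ pp k) (hpmnn : ∀ k, 0 ≤ pm k) (hple : ∀ k, pp k + pm k ≤ 1)
    (p : ℝ≥0∞) (hp : 1 ≤ p) :
    -- linearity
    (∀ (W₁ W₂ : ℝ → ℝ → ℝ) (a b t y k : ℝ),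
        WunF γ₀ ωb R pp pm (fun y' k' => a * W₁ y' k' + b * W₂ y' k') t y k
          = a * WunF γ₀ ωb R pp pm W₁ t y k + b * WunF γ₀ ωb R pp pm W₂ t y k) ∧
    -- L^p contraction
    (∀ (W₀ : ℝ → ℝ → ℝ), Measurable (Function.uncurry W₀) → ∀ t : ℝ, 0 ≤ t →
        eLpNorm (fun q : ℝ × ℝ => WunF γ₀ ωb R pp pm W₀ t q.1 q.2) p μYK
          ≤ eLpNorm (Function.uncurry W₀) p μYK) ∧
    -- semigroup property (a.e.)
    (∀ (W₀ : ℝ → ℝ → ℝ), Measurable (Function.uncurry W₀) → ∀ s t : ℝ, 0 ≤ s → 0 ≤ t →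
        ∀ᵐ q ∂μYK, WunF γ₀ ωb R pp pm W₀ (t + s) q.1 q.2
          = WunF γ₀ ωb R pp pm (fun y k => WunF γ₀ ωb R pp pm W₀ s y k) t q.1 q.2) :=
  ⟨fun W₁ W₂ a b _ _ _ => WunF_mul_add_mul W₁ W₂ a b,
    fun _ hW _ ht => eLpNorm_WunF_le hγ₀.le hωbm hωbodd hRnn hppm hpmm hpmev hppnn hpmnn hple
      hW.aestronglyMeasurable ht hp,
    fun _ _ _ _ hs ht => ae_WunF_add_eq_WunF_WunF hωbm hωbodd hRev hs ht⟩

/-- `𝔚^un_t` is linear, a contraction on every `L^p(ℝ×𝕋)`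
(`1 ≤ p ≤ ∞`), and the family `(𝔚^un_t)_{t≥0}` is a semigroup (almost everywhere). -/
theorem Wun_lp_contraction_semigroup
    (γ₀ : ℝ) (hγ₀ : 0 < γ₀)
    (ωb : ℝ → ℝ) (hωbm : Measurable ωb) (hωbodd : ∀ k, ωb (-k) = -ωb k)
    (hωbb : ∃ C : ℝ, ∀ k, |ωb k| ≤ C)
    (R : ℝ → ℝ) (hRm : Measurable R) (hRev : ∀ k, R (-k) = R k) (hRnn : ∀ k, 0 ≤ R k)
    (hRb : ∃ C : ℝ, ∀ k, R k ≤ C)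
    (pp pm : ℝ → ℝ) (hppm : Measurable pp) (hpmm : Measurable pm)
    (hppev : ∀ k, pp (-k) = pp k) (hpmev : ∀ k, pm (-k) = pm k)
    (hppnn : ∀ k, 0 ≤ pp k) (hpmnn : ∀ k, 0 ≤ pm k) (hple : ∀ k, pp k + pm k ≤ 1)
    (p : ℝ≥0∞) (hp : 1 ≤ p) :
    -- linearity
    (∀ (W₁ W₂ : ℝ → ℝ → ℝ) (a b t y k : ℝ),
        WunF γ₀ ωb R pp pm (fun y' k' => a * W₁ y' k' + b * W₂ y' k') t y k
          = a * WunF γ₀ ωb R pp pm W₁ t y k + b * WunF γ₀ ωb R pp pm W₂ t y k) ∧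
    -- L^p contraction
    (∀ (W₀ : ℝ → ℝ → ℝ), Measurable (Function.uncurry W₀) → ∀ t : ℝ, 0 ≤ t →
        eLpNorm (fun q : ℝ × ℝ => WunF γ₀ ωb R pp pm W₀ t q.1 q.2) p μYK
          ≤ eLpNorm (Function.uncurry W₀) p μYK) ∧
    -- semigroup property (a.e.)
    (∀ (W₀ : ℝ → ℝ → ℝ), Measurable (Function.uncurry W₀) → ∀ s t : ℝ, 0 ≤ s → 0 ≤ t →
        ∀ᵐ q ∂μYK, WunF γ₀ ωb R pp pm W₀ (t + s) q.1 q.2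
          = WunF γ₀ ωb R pp pm (fun y k => WunF γ₀ ωb R pp pm W₀ s y k) t q.1 q.2) :=
  Wun_lp_contraction_semigroup_general γ₀ hγ₀ ωb hωbm hωbodd R hRev hRnn pp pm hppm hpmm hpmev hppnn
    hpmnn hple p hp
end
end

section
/- Fix ε ∈ (0,1], γ₀ > 0, and let a ≥ 0 and w ∈ ℝ. Let Ω be the complex 2×2 matrix [[−a − i w, a], [a, −a + i w]] and 𝔣 = (1, −1)ᵀ. Then for every λ ∈ ℂ with Re λ > 0 one has λ² + 2aλ + w² ≠ 0 and ∫_0^∞ e^{−λ t} · ½ (e^{Ω t} 𝔣 · 𝔣) dt = λ / (λ² + 2aλ + w²), where e^{Ωt} is the matrix exponential and v · u denotes the bilinear dot product v₁u₁ + v₂u₂. -/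
open MeasureTheory Set Matrix Filter Nat Topology

noncomputable section

/-- The matrix `Ω = [[−a − i w, a], [a, −a + i w]]`. -/
def Omat (a w : ℝ) : Matrix (Fin 2) (Fin 2) ℂ :=
  !![-(a:ℂ) - Complex.I * (w:ℂ), (a:ℂ); (a:ℂ), -(a:ℂ) + Complex.I * (w:ℂ)]

/-- The vector `𝔣 = (1, −1)ᵀ`. -/
def fvec : Fin 2 → ℂ := ![1, -1]

lemma hasSum_even_part (s : ℂ) :
    HasSum (fun k : ℕ => s ^ (2 * k) / ((2 * k)! : ℂ))
      ((Complex.exp s + Complex.exp (-s)) / 2) := by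
  have h1 : HasSum (fun n : ℕ => s ^ n / n !) (Complex.exp s) := by
    simpa [Complex.exp_eq_exp_ℂ] using NormedSpace.expSeries_div_hasSum_exp s
  have h2 : HasSum (fun n : ℕ => (-s) ^ n / n !) (Complex.exp (-s)) := by
    simpa [Complex.exp_eq_exp_ℂ] using NormedSpace.expSeries_div_hasSum_exp (-s)
  have h3 : HasSum (fun n : ℕ => (s ^ n + (-s) ^ n) / (n ! : ℂ))
      (Complex.exp s + Complex.exp (-s)) := by
    have hfe : (fun n : ℕ => (s ^ n + (-s) ^ n) / (n ! : ℂ))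
        = fun n : ℕ => s ^ n / (n ! : ℂ) + (-s) ^ n / (n ! : ℂ) := by
      funext n; ring
    rw [hfe]; exact h1.add h2
  have h4 : HasSum ((fun n : ℕ => (s ^ n + (-s) ^ n) / (n ! : ℂ)) ∘ (fun k => 2 * k))
      (Complex.exp s + Complex.exp (-s)) := by
    rw [Function.Injective.hasSum_iff (fun a b hab => by omega)]
    · exact h3
    · intro n hn
      have hodd : Odd n := by simpa using hn
      simp [hodd.neg_pow]
  have hfe2 : (fun k : ℕ => s ^ (2 * k) / ((2 * k)! : ℂ))
      = fun k : ℕ => ((fun n : ℕ => (s ^ n + (-s) ^ n) / (n ! : ℂ)) ∘ (fun k => 2 * k)) k / 2 := by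
    funext k
    have hev : (-s) ^ (2 * k) = s ^ (2 * k) := Even.neg_pow ⟨k, by ring⟩ s
    simp only [Function.comp_apply, hev]
    ring
  rw [hfe2]
  exact h4.div_const 2

lemma hasSum_odd_part (s : ℂ) :
    HasSum (fun k : ℕ => s ^ (2 * k + 1) / ((2 * k + 1)! : ℂ))
      ((Complex.exp s - Complex.exp (-s)) / 2) := by
  have h1 : HasSum (fun n : ℕ => s ^ n / n !) (Complex.exp s) := by
    simpa [Complex.exp_eq_exp_ℂ] using NormedSpace.expSeries_div_hasSum_exp s
  have h2 : HasSum (fun n : ℕ => (-s) ^ n / n !) (Complex.exp (-s)) := by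
    simpa [Complex.exp_eq_exp_ℂ] using NormedSpace.expSeries_div_hasSum_exp (-s)
  have h3 : HasSum (fun n : ℕ => (s ^ n - (-s) ^ n) / (n ! : ℂ))
      (Complex.exp s - Complex.exp (-s)) := by
    have hfe : (fun n : ℕ => (s ^ n - (-s) ^ n) / (n ! : ℂ))
        = fun n : ℕ => s ^ n / (n ! : ℂ) - (-s) ^ n / (n ! : ℂ) := by
      funext n; ring
    rw [hfe]; exact h1.sub h2
  have h4 : HasSum ((fun n : ℕ => (s ^ n - (-s) ^ n) / (n ! : ℂ)) ∘ (fun k => 2 * k + 1))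
      (Complex.exp s - Complex.exp (-s)) := by
    rw [Function.Injective.hasSum_iff (fun a b hab => by omega)]
    · exact h3
    · intro n hn
      have heven : Even n := by simpa using hn
      simp [heven.neg_pow]
  have hfe2 : (fun k : ℕ => s ^ (2 * k + 1) / ((2 * k + 1)! : ℂ))
      = fun k : ℕ =>
        ((fun n : ℕ => (s ^ n - (-s) ^ n) / (n ! : ℂ)) ∘ (fun k => 2 * k + 1)) k / 2 := by
    funext k
    have hodd : (-s) ^ (2 * k + 1) = -s ^ (2 * k + 1) := Odd.neg_pow ⟨k, by ring⟩ s
    simp only [Function.comp_apply, hodd]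
    ring
  rw [hfe2]
  exact h4.div_const 2


lemma exp_sq_zero (M : Matrix (Fin 2) (Fin 2) ℂ) (h : M * M = 0) :
    NormedSpace.exp M = 1 + M := by
  simp only [NormedSpace.exp_eq_tsum ℂ]
  have hpow : ∀ n, 2 ≤ n → M ^ n = 0 := by
    intro n hn
    obtain ⟨k, rfl⟩ := Nat.exists_eq_add_of_le hn
    rw [pow_add, pow_two, h, zero_mul]
  rw [tsum_eq_sum (s := Finset.range 2) ?_]
  · simp [Finset.sum_range_succ]
  · intro n hn
    rw [hpow n (by simp at hn; omega), smul_zero]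

lemma exp_of_sq (M : Matrix (Fin 2) (Fin 2) ℂ) (s : ℂ) (hs : s ≠ 0)
    (h : M * M = (s ^ 2) • (1 : Matrix (Fin 2) (Fin 2) ℂ)) :
    NormedSpace.exp M
      = ((Complex.exp s + Complex.exp (-s)) / 2) • (1 : Matrix (Fin 2) (Fin 2) ℂ)
        + ((Complex.exp s - Complex.exp (-s)) / (2 * s)) • M := by
  have hpow_even : ∀ k : ℕ, M ^ (2 * k) = (s ^ (2 * k)) • (1 : Matrix (Fin 2) (Fin 2) ℂ) := by
    intro k
    rw [pow_mul, pow_two, h, smul_pow, one_pow, ← pow_mul]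
  have hpow_odd : ∀ k : ℕ, M ^ (2 * k + 1) = (s ^ (2 * k)) • M := by
    intro k
    rw [pow_succ, hpow_even, smul_mul_assoc, one_mul]
  have he : HasSum (fun k : ℕ => (((2 * k)! : ℂ))⁻¹ • M ^ (2 * k))
      (((Complex.exp s + Complex.exp (-s)) / 2) • (1 : Matrix (Fin 2) (Fin 2) ℂ)) := by
    have h0 := (hasSum_even_part s).smul_const (1 : Matrix (Fin 2) (Fin 2) ℂ)
    have hfun : (fun k : ℕ => (((2 * k)! : ℂ))⁻¹ • M ^ (2 * k))
        = fun k : ℕ => (s ^ (2 * k) / ((2 * k)! : ℂ)) • (1 : Matrix (Fin 2) (Fin 2) ℂ) := by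
      funext k
      rw [hpow_even, smul_smul, div_eq_mul_inv, mul_comm]
    rw [hfun]
    exact h0
  have ho : HasSum (fun k : ℕ => (((2 * k + 1)! : ℂ))⁻¹ • M ^ (2 * k + 1))
      (((Complex.exp s - Complex.exp (-s)) / (2 * s)) • M) := by
    have h1 := ((hasSum_odd_part s).div_const s).smul_const M
    have hfun : (fun k : ℕ => (((2 * k + 1)! : ℂ))⁻¹ • M ^ (2 * k + 1))
        = fun k : ℕ => (s ^ (2 * k + 1) / ((2 * k + 1)! : ℂ) / s) • M := by
      funext k
      rw [hpow_odd, smul_smul]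
      congr 1
      rw [pow_succ, div_div, mul_div_mul_right _ _ hs, div_eq_mul_inv, mul_comm]
    rw [hfun]
    rw [div_div] at h1
    exact h1
  have hsum : HasSum (fun n : ℕ => ((n ! : ℂ))⁻¹ • M ^ n)
      (((Complex.exp s + Complex.exp (-s)) / 2) • (1 : Matrix (Fin 2) (Fin 2) ℂ)
        + ((Complex.exp s - Complex.exp (-s)) / (2 * s)) • M) :=
    HasSum.even_add_odd he ho
  rw [NormedSpace.exp_eq_tsum ℂ]
  exact hsum.tsum_eq

lemma exp_smul_one (c : ℂ) :
    NormedSpace.exp (c • (1 : Matrix (Fin 2) (Fin 2) ℂ)) = Complex.exp c • 1 := by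
  have h1 : c • (1 : Matrix (Fin 2) (Fin 2) ℂ) = Matrix.diagonal (fun _ => c) := by
    ext i j
    by_cases hij : i = j <;>
      simp [Matrix.one_apply, Matrix.diagonal, hij]
  rw [h1, Matrix.exp_diagonal]
  ext i j
  by_cases hij : i = j <;>
    simp [Matrix.one_apply, Matrix.diagonal, hij, Pi.coe_exp, Complex.exp_eq_exp_ℂ]

lemma norm_cexp_real (z : ℂ) (t : ℝ) : ‖Complex.exp (z * t)‖ = Real.exp (z.re * t) := by
  rw [Complex.norm_exp]
  congr 1
  simp [Complex.mul_re]

lemma tendsto_cexp_atTop_zero {z : ℂ} (hz : z.re < 0) :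
    Tendsto (fun t : ℝ => Complex.exp (z * t)) atTop (𝓝 0) := by
  rw [tendsto_zero_iff_norm_tendsto_zero]
  simp only [norm_cexp_real]
  rw [Real.tendsto_exp_comp_nhds_zero]
  exact Tendsto.const_mul_atTop_of_neg hz tendsto_id

lemma tendsto_mul_cexp_atTop_zero {z : ℂ} (hz : z.re < 0) :
    Tendsto (fun t : ℝ => (t : ℂ) * Complex.exp (z * t)) atTop (𝓝 0) := by
  rw [tendsto_zero_iff_norm_tendsto_zero]
  have key : Tendsto (fun t : ℝ => t ^ (1 : ℝ) * Real.exp (-(-z.re) * t)) atTop (𝓝 0) :=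
    tendsto_rpow_mul_exp_neg_mul_atTop_nhds_zero 1 (-z.re) (by linarith)
  apply key.congr'
  filter_upwards [eventually_gt_atTop (0 : ℝ)] with t ht
  rw [norm_mul, norm_cexp_real, Real.rpow_one, Complex.norm_real, Real.norm_eq_abs,
    abs_of_pos ht, neg_neg]

lemma integrableOn_cexp {z : ℂ} (hz : z.re < 0) :
    IntegrableOn (fun t : ℝ => Complex.exp (z * t)) (Ioi (0 : ℝ)) := by
  have hc : Continuous fun t : ℝ => Complex.exp (z * t) :=
    Complex.continuous_exp.comp (continuous_const.mul Complex.continuous_ofReal)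
  refine Integrable.mono' (g := fun t => Real.exp (z.re * t)) ?_
    hc.aestronglyMeasurable.restrict ?_
  · have h := exp_neg_integrableOn_Ioi 0 (b := -z.re) (by linarith)
    have h2 : IntegrableOn (fun x : ℝ => Real.exp (z.re * x)) (Ioi 0) := by simpa using h
    exact h2
  · filter_upwards with t
    rw [norm_cexp_real]

lemma integrableOn_mul_cexp {z : ℂ} (hz : z.re < 0) :
    IntegrableOn (fun t : ℝ => (t : ℂ) * Complex.exp (z * t)) (Ioi (0 : ℝ)) := by
  have hc : Continuous fun t : ℝ => (t : ℂ) * Complex.exp (z * t) :=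
    Complex.continuous_ofReal.mul
      (Complex.continuous_exp.comp (continuous_const.mul Complex.continuous_ofReal))
  refine Integrable.mono' (g := fun t => |t| * Real.exp (z.re * t)) ?_
    hc.aestronglyMeasurable.restrict ?_
  · refine integrable_of_isBigO_exp_neg (b := -z.re / 2) (by linarith)
      ((continuous_abs.mul (Real.continuous_exp.comp (continuous_const.mul continuous_id))).continuousOn) ?_
    rw [Asymptotics.isBigO_iff]
    refine ⟨1, ?_⟩
    have key : Tendsto (fun t : ℝ => t ^ (1 : ℝ) * Real.exp (-(-z.re / 2) * t)) atTop (𝓝 0) :=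
      tendsto_rpow_mul_exp_neg_mul_atTop_nhds_zero 1 (-z.re / 2) (by linarith)
    have key2 : ∀ᶠ t : ℝ in atTop, |t ^ (1:ℝ) * Real.exp (-(-z.re / 2) * t)| ≤ 1 := by
      have := key.eventually (eventually_le_nhds (by norm_num : (0:ℝ) < 1))
      filter_upwards [this, eventually_gt_atTop (0:ℝ)] with t h1 h2
      rwa [abs_of_nonneg (by positivity)]
    filter_upwards [key2, eventually_gt_atTop (0:ℝ)] with t h1 h2
    have hfac : t ^ (1:ℝ) * Real.exp (-(-z.re / 2) * t) ≤ 1 := by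
      rwa [abs_of_nonneg (by positivity)] at h1
    have hsplit : |t| * Real.exp (z.re * t)
        = (t ^ (1:ℝ) * Real.exp (-(-z.re / 2) * t)) * Real.exp (-(-z.re / 2) * t) := by
      rw [Real.rpow_one, abs_of_pos h2, mul_assoc, ← Real.exp_add]
      congr 1
      ring
    rw [Real.norm_eq_abs, Real.norm_eq_abs, one_mul,
      abs_of_nonneg (by positivity : (0:ℝ) ≤ |t| * Real.exp (z.re * t)), hsplit,
      abs_of_pos (Real.exp_pos _)]
    calc (t ^ (1:ℝ) * Real.exp (-(-z.re / 2) * t)) * Real.exp (-(-z.re / 2) * t)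
        ≤ 1 * Real.exp (-(-z.re / 2) * t) :=
          mul_le_mul_of_nonneg_right hfac (Real.exp_pos _).le
      _ = Real.exp (-(-z.re / 2) * t) := one_mul _
  · filter_upwards with t
    rw [norm_mul, norm_cexp_real, Complex.norm_real, Real.norm_eq_abs]

lemma hasDerivAt_cexp_real (z : ℂ) (x : ℝ) :
    HasDerivAt (fun t : ℝ => Complex.exp (z * t)) (z * Complex.exp (z * x)) x := by
  have h1 : HasDerivAt (fun u : ℂ => Complex.exp (z * u)) (Complex.exp (z * x) * z) (x : ℂ) :=
    (Complex.hasDerivAt_exp (z * x)).comp (x : ℂ) (by simpa using (hasDerivAt_id (x : ℂ)).const_mul z)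
  have := h1.comp_ofReal
  simpa [mul_comm] using this

lemma integral_cexp_Ioi {z : ℂ} (hz : z.re < 0) :
    ∫ t in Ioi (0 : ℝ), Complex.exp (z * t) = -z⁻¹ := by
  have hz0 : z ≠ 0 := fun h => by simp [h] at hz
  have hderiv : ∀ x ∈ Ici (0 : ℝ),
      HasDerivAt (fun t : ℝ => z⁻¹ * Complex.exp (z * t)) (Complex.exp (z * x)) x := by
    intro x _
    have := (hasDerivAt_cexp_real z x).const_mul z⁻¹
    refine this.congr_deriv ?_
    rw [← mul_assoc, inv_mul_cancel₀ hz0, one_mul]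
  have htend : Tendsto (fun t : ℝ => z⁻¹ * Complex.exp (z * t)) atTop (𝓝 0) := by
    simpa using (tendsto_cexp_atTop_zero hz).const_mul z⁻¹
  have := integral_Ioi_of_hasDerivAt_of_tendsto' hderiv (integrableOn_cexp hz) htend
  rw [this]
  simp

lemma integral_mul_cexp_Ioi {z : ℂ} (hz : z.re < 0) :
    ∫ t in Ioi (0 : ℝ), (t : ℂ) * Complex.exp (z * t) = z⁻¹ ^ 2 := by
  have hz0 : z ≠ 0 := fun h => by simp [h] at hz
  have hderiv : ∀ x ∈ Ici (0 : ℝ),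
      HasDerivAt (fun t : ℝ => (z⁻¹ * t - (z ^ 2)⁻¹) * Complex.exp (z * t))
        ((x : ℂ) * Complex.exp (z * x)) x := by
    intro x _
    have h1 : HasDerivAt (fun t : ℝ => z⁻¹ * (t : ℂ) - (z ^ 2)⁻¹) z⁻¹ x := by
      simpa using ((Complex.ofRealCLM.hasDerivAt (x := x)).const_mul z⁻¹).sub_const ((z ^ 2)⁻¹)
    have h2 := h1.mul (hasDerivAt_cexp_real z x)
    refine h2.congr_deriv ?_
    field_simp
    ring
  have htend : Tendsto (fun t : ℝ => (z⁻¹ * t - (z ^ 2)⁻¹) * Complex.exp (z * t)) atTop (𝓝 0) := by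
    have h1 := (tendsto_mul_cexp_atTop_zero hz).const_mul z⁻¹
    have h2 := (tendsto_cexp_atTop_zero hz).const_mul ((z ^ 2)⁻¹)
    have h3 := h1.sub h2
    simp only [mul_zero, sub_zero] at h3
    apply h3.congr
    intro t
    ring
  have := integral_Ioi_of_hasDerivAt_of_tendsto' hderiv (integrableOn_mul_cexp hz) htend
  rw [this]
  simp [inv_pow]

def Mmat (a w : ℝ) : Matrix (Fin 2) (Fin 2) ℂ :=
  !![-(Complex.I * (w:ℂ)), (a:ℂ); (a:ℂ), Complex.I * (w:ℂ)]

lemma Omat_decomp (a w : ℝ) (t : ℝ) :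
    (t:ℂ) • Omat a w
      = ((-(a:ℂ) * t)) • (1 : Matrix (Fin 2) (Fin 2) ℂ) + (t:ℂ) • Mmat a w := by
  ext i j
  fin_cases i <;> fin_cases j <;>
    simp [Omat, Mmat, Matrix.one_apply] <;> ring

lemma Mmat_sq (a w : ℝ) :
    Mmat a w * Mmat a w = (((a:ℂ) ^ 2 - (w:ℂ) ^ 2)) • (1 : Matrix (Fin 2) (Fin 2) ℂ) := by
  ext i j
  fin_cases i <;> fin_cases j <;>
    simp [Mmat, Matrix.mul_apply, Fin.sum_univ_two, Matrix.one_apply] <;> ring_nf <;>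
      simp [Complex.I_sq] <;> ring

lemma dot_formula (a w : ℝ) (α β : ℂ) :
    dotProduct ((α • (1 : Matrix (Fin 2) (Fin 2) ℂ) + β • Mmat a w).mulVec fvec) fvec
      = 2 * α - 2 * (a:ℂ) * β := by
  simp [Mmat, fvec, Matrix.mulVec, dotProduct, Fin.sum_univ_two, Matrix.one_apply]
  ring

lemma exp_Omat_smul (a w : ℝ) (t : ℝ) :
    NormedSpace.exp ((t:ℂ) • Omat a w)
      = Complex.exp (-(a:ℂ) * t) • NormedSpace.exp ((t:ℂ) • Mmat a w) := by
  rw [Omat_decomp]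
  rw [Matrix.exp_add_of_commute _ _ (((Commute.one_left (Mmat a w)).smul_left _).smul_right _)]
  rw [exp_smul_one, Matrix.smul_mul, Matrix.one_mul]

lemma pointwise_ne (a w : ℝ) (s : ℂ) (hs2 : s ^ 2 = (a:ℂ) ^ 2 - (w:ℂ) ^ 2) (hs : s ≠ 0)
    (t : ℝ) (ht : 0 < t) :
    (1:ℂ)/2 * dotProduct ((NormedSpace.exp ((t:ℂ) • Omat a w)).mulVec fvec) fvec
      = Complex.exp (-(a:ℂ) * t) *
        ((Complex.exp ((t:ℂ) * s) + Complex.exp (-((t:ℂ) * s))) / 2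
          - (a:ℂ) * ((Complex.exp ((t:ℂ) * s) - Complex.exp (-((t:ℂ) * s))) / (2 * s))) := by
  have ht0 : (t:ℂ) ≠ 0 := by exact_mod_cast ne_of_gt ht
  have hts : (t:ℂ) * s ≠ 0 := mul_ne_zero ht0 hs
  have hsq : ((t:ℂ) • Mmat a w) * ((t:ℂ) • Mmat a w)
      = (((t:ℂ) * s) ^ 2) • (1 : Matrix (Fin 2) (Fin 2) ℂ) := by
    rw [Matrix.smul_mul, Matrix.mul_smul, Mmat_sq, smul_smul, smul_smul, ← hs2]
    congr 1
    ring
  rw [exp_Omat_smul, exp_of_sq _ _ hts hsq]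
  have hrw : ((Complex.exp ((t:ℂ) * s) - Complex.exp (-((t:ℂ) * s))) / (2 * ((t:ℂ) * s)))
      • ((t:ℂ) • Mmat a w)
      = ((Complex.exp ((t:ℂ) * s) - Complex.exp (-((t:ℂ) * s))) / (2 * s) / (t:ℂ)) • ((t:ℂ) • Mmat a w) := by
    congr 1
    rw [div_div]
    congr 1
    ring
  rw [hrw, smul_smul, div_mul_cancel₀ _ ht0]
  rw [Matrix.smul_mulVec, smul_dotProduct, dot_formula]
  simp only [smul_eq_mul]
  ring

lemma pointwise_deg (a w : ℝ) (h : (a:ℂ) ^ 2 - (w:ℂ) ^ 2 = 0) (t : ℝ) :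
    (1:ℂ)/2 * dotProduct ((NormedSpace.exp ((t:ℂ) • Omat a w)).mulVec fvec) fvec
      = Complex.exp (-(a:ℂ) * t) * (1 - (a:ℂ) * t) := by
  have hsq : ((t:ℂ) • Mmat a w) * ((t:ℂ) • Mmat a w) = 0 := by
    rw [Matrix.smul_mul, Matrix.mul_smul, Mmat_sq, h]
    simp
  rw [exp_Omat_smul, exp_sq_zero _ hsq]
  have h1 : (1 : Matrix (Fin 2) (Fin 2) ℂ) + (t:ℂ) • Mmat a w
      = (1:ℂ) • (1 : Matrix (Fin 2) (Fin 2) ℂ) + (t:ℂ) • Mmat a w := by rw [one_smul]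
  rw [h1, Matrix.smul_mulVec, smul_dotProduct, dot_formula]
  simp only [smul_eq_mul]
  ring

/-- For `a ≥ 0`, `w ∈ ℝ` and `Re λ > 0` one has
`λ² + 2aλ + w² ≠ 0` and the Laplace transform of `t ↦ ½ e^{Ωt}𝔣·𝔣` equals
`λ/(λ² + 2aλ + w²)`, where `Ω = [[−a − i w, a],[a, −a + i w]]` and `·` is the bilinear
dot product. -/
theorem laplace_transform_of_damped_kernel
    (ε γ₀ : ℝ) (hε : ε ∈ Ioc (0:ℝ) 1) (hγ₀ : 0 < γ₀)
    (a w : ℝ) (ha : 0 ≤ a) (lam : ℂ) (hlam : 0 < lam.re) :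
    lam ^ 2 + 2 * (a:ℂ) * lam + (w:ℂ) ^ 2 ≠ 0 ∧
    (∫ t in Ioi (0:ℝ), Complex.exp (-(lam * (t:ℂ))) *
        ((1:ℂ)/2 * dotProduct ((NormedSpace.exp ((t:ℂ) • Omat a w)).mulVec fvec) fvec))
      = lam / (lam ^ 2 + 2 * (a:ℂ) * lam + (w:ℂ) ^ 2) := by
  obtain ⟨s, hs2, hsre1, hsre2⟩ :
      ∃ s : ℂ, s ^ 2 = (a:ℂ) ^ 2 - (w:ℂ) ^ 2 ∧ s.re ≤ a ∧ -a ≤ s.re := by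
    by_cases hcase : w ^ 2 ≤ a ^ 2
    · refine ⟨((Real.sqrt (a ^ 2 - w ^ 2) : ℝ) : ℂ), ?_, ?_, ?_⟩
      · rw [← Complex.ofReal_pow, Real.sq_sqrt (by linarith)]
        push_cast; ring
      · simp only [Complex.ofReal_re]
        calc Real.sqrt (a ^ 2 - w ^ 2) ≤ Real.sqrt (a ^ 2) := Real.sqrt_le_sqrt (by nlinarith)
          _ = a := Real.sqrt_sq ha
      · simp only [Complex.ofReal_re]
        have := Real.sqrt_nonneg (a ^ 2 - w ^ 2); linarith
    · refine ⟨Complex.I * ((Real.sqrt (w ^ 2 - a ^ 2) : ℝ) : ℂ), ?_, ?_, ?_⟩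
      · rw [mul_pow, Complex.I_sq, ← Complex.ofReal_pow, Real.sq_sqrt (by linarith)]
        push_cast; ring
      · simp; linarith
      · simp; linarith
  have hd1 : lam + (a:ℂ) - s ≠ 0 := by
    intro h
    have h' : (lam + (a:ℂ) - s).re = 0 := by rw [h]; simp
    simp only [Complex.sub_re, Complex.add_re, Complex.ofReal_re] at h'
    linarith
  have hd2 : lam + (a:ℂ) + s ≠ 0 := by
    intro h
    have h' : (lam + (a:ℂ) + s).re = 0 := by rw [h]; simp
    simp only [Complex.add_re, Complex.ofReal_re] at h'
    linarith
  have hfac : lam ^ 2 + 2 * (a:ℂ) * lam + (w:ℂ) ^ 2 = (lam + a - s) * (lam + a + s) := by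
    linear_combination hs2
  refine ⟨hfac ▸ mul_ne_zero hd1 hd2, ?_⟩
  by_cases hs0 : s = 0
  · -- degenerate case
    have hzz : (a:ℂ) ^ 2 - (w:ℂ) ^ 2 = 0 := by rw [← hs2, hs0]; ring
    have hzre : (-(a:ℂ) - lam).re < 0 := by
      simp only [Complex.sub_re, Complex.neg_re, Complex.ofReal_re]
      linarith
    have hcong : EqOn
        (fun t : ℝ => Complex.exp (-(lam * (t:ℂ))) *
          ((1:ℂ)/2 * dotProduct ((NormedSpace.exp ((t:ℂ) • Omat a w)).mulVec fvec) fvec))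
        (fun t : ℝ => Complex.exp ((-(a:ℂ) - lam) * t)
          - (a:ℂ) * ((t:ℂ) * Complex.exp ((-(a:ℂ) - lam) * t)))
        (Ioi (0:ℝ)) := by
      intro t ht
      simp only
      rw [pointwise_deg a w hzz t]
      rw [show (-(a:ℂ) - lam) * (t:ℂ) = -(a:ℂ) * t + -(lam * t) by ring, Complex.exp_add]
      ring
    rw [setIntegral_congr_fun measurableSet_Ioi hcong]
    rw [integral_sub (integrableOn_cexp hzre) ((integrableOn_mul_cexp hzre).const_mul _)]
    rw [integral_const_mul, integral_cexp_Ioi hzre, integral_mul_cexp_Ioi hzre]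
    rw [hfac, hs0]
    have hd : lam + (a:ℂ) ≠ 0 := by
      intro h; apply hd1; rw [hs0, h]; ring
    have hne : -(a:ℂ) - lam ≠ 0 := by
      intro h; apply hd; linear_combination -h
    rw [show -(a:ℂ) - lam = -(lam + a) by ring, sub_zero, add_zero]
    field_simp
    ring
  · -- nondegenerate case
    have hz₁ : (s - a - lam).re < 0 := by
      simp only [Complex.sub_re, Complex.ofReal_re]
      linarith
    have hz₂ : (-s - a - lam).re < 0 := by
      simp only [Complex.sub_re, Complex.neg_re, Complex.ofReal_re]
      linarith
    have hcong : EqOn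
        (fun t : ℝ => Complex.exp (-(lam * (t:ℂ))) *
          ((1:ℂ)/2 * dotProduct ((NormedSpace.exp ((t:ℂ) • Omat a w)).mulVec fvec) fvec))
        (fun t : ℝ => ((1 - (a:ℂ)/s)/2) * Complex.exp ((s - a - lam) * t)
          + ((1 + (a:ℂ)/s)/2) * Complex.exp ((-s - a - lam) * t))
        (Ioi (0:ℝ)) := by
      intro t ht
      simp only
      rw [pointwise_ne a w s hs2 hs0 t ht]
      rw [show (s - (a:ℂ) - lam) * (t:ℂ) = (t:ℂ) * s + (-(a:ℂ) * t + -(lam * t)) by ring,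
        show (-s - (a:ℂ) - lam) * (t:ℂ) = -((t:ℂ) * s) + (-(a:ℂ) * t + -(lam * t)) by ring,
        Complex.exp_add, Complex.exp_add, Complex.exp_add, Complex.exp_add]
      field_simp
      ring
    rw [setIntegral_congr_fun measurableSet_Ioi hcong]
    rw [integral_add ((integrableOn_cexp hz₁).const_mul _) ((integrableOn_cexp hz₂).const_mul _)]
    rw [integral_const_mul, integral_const_mul, integral_cexp_Ioi hz₁, integral_cexp_Ioi hz₂]
    rw [hfac]
    have hz₁ne : s - (a:ℂ) - lam ≠ 0 := by
      intro h; apply hd1; linear_combination -h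
    have hz₂ne : -s - (a:ℂ) - lam ≠ 0 := by
      intro h; apply hd2; linear_combination -h
    field_simp
    ring
end
end

section
/- Let ω : 𝕋 → ℝ be bounded measurable, R : 𝕋 → [0,∞) bounded measurable, γ₀ > 0, γ₁ > 0 and ε ∈ (0,1]. For Re λ > 0 set J̃_ε(λ) = ∫_𝕋 λ/(λ² + 2εγ₀R(k)λ + ω(k)²) dk. Then 1 + γ₁J̃_ε(λ) ≠ 0, and defining g̃_ε(λ) = (1 + γ₁J̃_ε(λ))^{-1}, one has |g̃_ε(λ)| ≤ 1 and γ₁ |J̃_ε(λ) g̃_ε(λ)| ≤ 2 for every λ with Re λ > 0. -/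
open MeasureTheory Set

noncomputable section

/-- `J̃_ε(λ) = ∫_𝕋 λ/(λ² + 2εγ₀R(k)λ + ω(k)²) dk`. -/
def Jeps (ω R : ℝ → ℝ) (γ₀ ε : ℝ) (lam : ℂ) : ℂ :=
  ∫ k in torusK, lam / (lam ^ 2 + 2 * (ε:ℂ) * (γ₀:ℂ) * (R k : ℂ) * lam + (ω k : ℂ) ^ 2)

/-- With `J̃_ε` as above, `1 + γ₁J̃_ε(λ) ≠ 0`, the function
`g̃_ε(λ) = (1 + γ₁J̃_ε(λ))⁻¹` satisfies `|g̃_ε(λ)| ≤ 1`, and `γ₁|J̃_ε(λ)g̃_ε(λ)| ≤ 2`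
for every `λ` with `Re λ > 0`. -/
theorem g_eps_bounds
    (ω : ℝ → ℝ) (hωm : Measurable ω) (hωb : ∃ C : ℝ, ∀ k, |ω k| ≤ C)
    (R : ℝ → ℝ) (hRm : Measurable R) (hRnn : ∀ k, 0 ≤ R k) (hRb : ∃ C : ℝ, ∀ k, R k ≤ C)
    (γ₀ γ₁ : ℝ) (hγ₀ : 0 < γ₀) (hγ₁ : 0 < γ₁) (ε : ℝ) (hε : ε ∈ Ioc (0:ℝ) 1)
    (lam : ℂ) (hlam : 0 < lam.re) :
    1 + (γ₁:ℂ) * Jeps ω R γ₀ ε lam ≠ 0 ∧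
    ‖(1 + (γ₁:ℂ) * Jeps ω R γ₀ ε lam)⁻¹‖ ≤ 1 ∧
    γ₁ * ‖Jeps ω R γ₀ ε lam * (1 + (γ₁:ℂ) * Jeps ω R γ₀ ε lam)⁻¹‖ ≤ 2 := by
  have hε0 : 0 < ε := hε.1
  have hlam0 : lam ≠ 0 := by
    intro h; rw [h] at hlam; simp at hlam
  have hnormSq : 0 < Complex.normSq lam := by
    rwa [Complex.normSq_pos]
  -- pointwise nonnegativity of the real part of the integrand
  have hre : ∀ k, 0 ≤ (lam / (lam ^ 2 + 2 * (ε:ℂ) * (γ₀:ℂ) * (R k : ℂ) * lam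
      + (ω k : ℂ) ^ 2)).re := by
    intro k
    set a : ℝ := 2 * ε * γ₀ * R k with ha
    set b : ℝ := (ω k) ^ 2 with hb
    have hR0 : 0 ≤ R k := hRnn k
    have ha0 : 0 ≤ a := by positivity
    have hb0 : 0 ≤ b := sq_nonneg _
    set w : ℂ := lam + (a : ℂ) + (b : ℂ) * lam⁻¹ with hw
    have hwre : 0 < w.re := by
      have h1 : w.re = lam.re + a + b * (lam.re / Complex.normSq lam) := by
        simp [hw, Complex.add_re, Complex.mul_re, Complex.inv_re, Complex.inv_im]
      rw [h1]
      have : 0 ≤ b * (lam.re / Complex.normSq lam) := by positivity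
      linarith
    have hwne : w ≠ 0 := by
      intro h
      rw [h] at hwre; simp at hwre
    have hden : lam ^ 2 + 2 * (ε:ℂ) * (γ₀:ℂ) * (R k : ℂ) * lam + (ω k : ℂ) ^ 2
        = lam * w := by
      rw [hw]
      push_cast [ha, hb]
      field_simp
    rw [hden]
    have : lam / (lam * w) = w⁻¹ := by
      field_simp
    rw [this, Complex.inv_re]
    exact div_nonneg hwre.le (Complex.normSq_nonneg _)
  -- real part of Jeps is nonnegative
  have hJre : 0 ≤ (Jeps ω R γ₀ ε lam).re := by
    rw [Jeps]
    by_cases hInt : Integrable (fun k => lam / (lam ^ 2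
        + 2 * (ε:ℂ) * (γ₀:ℂ) * (R k : ℂ) * lam + (ω k : ℂ) ^ 2))
        (volume.restrict torusK)
    · have h := integral_re hInt
      simp only [RCLike.re_to_complex] at h
      rw [← h]
      exact integral_nonneg fun k => hre k
    · rw [integral_undef hInt]
      simp
  set J := Jeps ω R γ₀ ε lam with hJ
  have h1re : 1 ≤ (1 + (γ₁:ℂ) * J).re := by
    have : (1 + (γ₁:ℂ) * J).re = 1 + γ₁ * J.re := by
      simp [Complex.add_re, Complex.mul_re]
    rw [this]
    nlinarith
  have habs : 1 ≤ ‖1 + (γ₁:ℂ) * J‖ :=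
    le_trans h1re (Complex.re_le_norm _)
  have hne : 1 + (γ₁:ℂ) * J ≠ 0 := by
    intro h
    rw [h] at habs
    simp at habs
    exact absurd habs (by norm_num)
  refine ⟨hne, ?_, ?_⟩
  · rw [norm_inv]
    exact inv_le_one_of_one_le₀ habs
  · have hg : ‖(1 + (γ₁:ℂ) * J)⁻¹‖ ≤ 1 := by
      rw [norm_inv]; exact inv_le_one_of_one_le₀ habs
    have key : (γ₁:ℂ) * (J * (1 + (γ₁:ℂ) * J)⁻¹) = 1 - (1 + (γ₁:ℂ) * J)⁻¹ := by
      field_simp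
      ring
    have habs' : ‖(γ₁:ℂ) * (J * (1 + (γ₁:ℂ) * J)⁻¹)‖
        = γ₁ * ‖J * (1 + (γ₁:ℂ) * J)⁻¹‖ := by
      rw [norm_mul, Complex.norm_real, Real.norm_eq_abs, abs_of_pos hγ₁]
    rw [← habs', key]
    have h3 := norm_sub_le (1:ℂ) ((1 + (γ₁:ℂ) * J)⁻¹)
    simp only [norm_one] at h3
    have h1 : ‖(1:ℂ)‖ = 1 := norm_one
    linarith
end
end

section
/- There exists a constant C > 0 such that for every ε ∈ (0, 1/2] and every A ∈ ℝ, ∫_0^1 ε / ((ε + |u − A|) √u) du ≤ C ε^{1/2} log(1/ε). -/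
open intervalIntegral MeasureTheory Real Set

namespace SqrtLogAux

variable {ε : ℝ}

lemma intEps (hε : 0 < ε) {c a b : ℝ} (hc : 0 ≤ c) (ha : 0 ≤ a) (hb : 0 ≤ b) :
    IntervalIntegrable (fun x => ε / (ε + (x + c))) volume a b := by
  apply ContinuousOn.intervalIntegrable
  apply ContinuousOn.div continuousOn_const (by fun_prop)
  intro x hx
  have hx0 : 0 ≤ x := le_trans (le_min ha hb) hx.1
  have : 0 < ε + (x + c) := by linarith
  exact this.ne'

lemma intEps0 (hε : 0 < ε) {a b : ℝ} (ha : 0 ≤ a) (hb : 0 ≤ b) :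
    IntervalIntegrable (fun x => ε / (ε + x)) volume a b := by
  have := intEps hε (le_refl 0) ha hb
  simpa using this

lemma contAbs (hε : 0 < ε) : Continuous fun x : ℝ => ε / (ε + |x|) := by
  apply continuous_const.div (by fun_prop)
  intro x
  have : 0 < ε + |x| := by positivity
  exact this.ne'

lemma shift_le (hε : 0 < ε) {c d : ℝ} (hc : 0 ≤ c) (hcd : c ≤ d) :
    ∫ x in c..d, ε / (ε + x) ≤ ∫ x in (0:ℝ)..(d - c), ε / (ε + x) := by
  have h1 : ∫ x in (0:ℝ)..(d-c), ε / (ε + (x + c)) = ∫ x in c..d, ε / (ε + x) := by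
    rw [intervalIntegral.integral_comp_add_right (fun x => ε / (ε + x)) c]
    norm_num
  rw [← h1]
  apply intervalIntegral.integral_mono_on (by linarith) (intEps hε hc le_rfl (by linarith))
    (intEps0 hε le_rfl (by linarith))
  intro x hx
  have hx0 : 0 ≤ x := hx.1
  gcongr
  all_goals linarith

lemma ext_le (hε : 0 < ε) {p q : ℝ} (hp : 0 ≤ p) (hpq : p ≤ q) :
    ∫ x in (0:ℝ)..p, ε / (ε + x) ≤ ∫ x in (0:ℝ)..q, ε / (ε + x) := by
  rw [← intervalIntegral.integral_add_adjacent_intervals (intEps0 hε le_rfl hp)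
    (intEps0 hε hp (le_trans hp hpq))]
  have h0 : 0 ≤ ∫ x in p..q, ε / (ε + x) := by
    apply intervalIntegral.integral_nonneg hpq
    intro x hx
    have : 0 ≤ x := le_trans hp hx.1
    positivity
  linarith

lemma nonneg0 (hε : 0 < ε) {q : ℝ} (hq : 0 ≤ q) :
    0 ≤ ∫ x in (0:ℝ)..q, ε / (ε + x) := by
  apply intervalIntegral.integral_nonneg hq
  intro x hx
  have : (0:ℝ) ≤ x := hx.1
  positivity

lemma abs_int_le_nonneg (hε : 0 < ε) {a b : ℝ} (ha : 0 ≤ a) (hab : a ≤ b) :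
    ∫ x in a..b, ε / (ε + |x|) ≤ ∫ x in (0:ℝ)..(b - a), ε / (ε + x) := by
  have heq : ∫ x in a..b, ε / (ε + |x|) = ∫ x in a..b, ε / (ε + x) := by
    apply intervalIntegral.integral_congr
    intro x hx
    rw [Set.uIcc_of_le hab] at hx
    show ε / (ε + |x|) = ε / (ε + x)
    rw [abs_of_nonneg (le_trans ha hx.1)]
  rw [heq]
  exact shift_le hε ha hab

lemma abs_int_le (hε : 0 < ε) {a b : ℝ} (hab : a ≤ b) :
    ∫ x in a..b, ε / (ε + |x|) ≤ 2 * ∫ x in (0:ℝ)..(b - a), ε / (ε + x) := by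
  have hI0 : 0 ≤ ∫ x in (0:ℝ)..(b-a), ε / (ε + x) := nonneg0 hε (by linarith)
  have hflip : ∀ p q : ℝ, ∫ x in p..q, ε / (ε + |x|) = ∫ x in (-q)..(-p), ε / (ε + |x|) := by
    intro p q
    rw [← intervalIntegral.integral_comp_neg (fun x => ε / (ε + |x|))]
    simp [abs_neg]
  rcases le_or_gt b 0 with hb | hb
  · rw [hflip]
    have := abs_int_le_nonneg hε (by linarith : (0:ℝ) ≤ -b) (by linarith : -b ≤ -a)
    have heq : -a - -b = b - a := by ring
    rw [heq] at this
    linarith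
  rcases le_or_gt 0 a with ha | ha
  · have := abs_int_le_nonneg hε ha hab
    linarith
  · -- a < 0 < b
    have hcont : Continuous fun x : ℝ => ε / (ε + |x|) := contAbs hε
    have hi1 : IntervalIntegrable (fun x => ε / (ε + |x|)) volume a 0 :=
      hcont.intervalIntegrable _ _
    have hi2 : IntervalIntegrable (fun x => ε / (ε + |x|)) volume 0 b :=
      hcont.intervalIntegrable _ _
    rw [← intervalIntegral.integral_add_adjacent_intervals hi1 hi2]
    have h1 : ∫ x in a..(0:ℝ), ε / (ε + |x|) ≤ ∫ x in (0:ℝ)..(b - a), ε / (ε + x) := by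
      rw [hflip, neg_zero]
      have := abs_int_le_nonneg hε (le_refl 0) (by linarith : (0:ℝ) ≤ -a)
      simp only [neg_zero, sub_zero] at this
      calc ∫ x in (0:ℝ)..(-a), ε / (ε + |x|) ≤ ∫ x in (0:ℝ)..(-a), ε / (ε + x) := this
        _ ≤ ∫ x in (0:ℝ)..(b - a), ε / (ε + x) := ext_le hε (by linarith) (by linarith)
    have h2 : ∫ x in (0:ℝ)..b, ε / (ε + |x|) ≤ ∫ x in (0:ℝ)..(b - a), ε / (ε + x) := by
      have := abs_int_le_nonneg hε (le_refl 0) hb.le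
      simp only [sub_zero] at this
      calc ∫ x in (0:ℝ)..b, ε / (ε + |x|) ≤ ∫ x in (0:ℝ)..b, ε / (ε + x) := this
        _ ≤ ∫ x in (0:ℝ)..(b - a), ε / (ε + x) := ext_le hε hb.le (by linarith)
    linarith

lemma val_le (hε : 0 < ε) {L : ℝ} (hL : 0 ≤ L) (hL2 : L + ε ≤ 2) :
    ∫ x in (0:ℝ)..L, ε / (ε + x) ≤ ε * Real.log (2 / ε) := by
  have h1 : ∫ x in (0:ℝ)..L, ε / (ε + x) = ε * ∫ x in (0:ℝ)..L, 1 / (x + ε) := by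
    rw [← intervalIntegral.integral_const_mul]
    apply intervalIntegral.integral_congr
    intro x hx
    show ε / (ε + x) = ε * (1 / (x + ε))
    rw [mul_one_div, add_comm]
  rw [h1, intervalIntegral.integral_comp_add_right (fun x => 1 / x) ε, integral_one_div]
  · have harg : (L + ε) / (0 + ε) ≤ 2 / ε := by
      rw [zero_add]
      gcongr
    have hpos : 0 < (L + ε) / (0 + ε) := by positivity
    have := Real.log_le_log hpos harg
    have hε' := hε.le
    nlinarith [this]
  · rw [Set.uIcc_of_le (by linarith : (0:ℝ) + ε ≤ L + ε)]
    intro hmem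
    have := hmem.1
    linarith [hmem.1]

end SqrtLogAux

open SqrtLogAux MeasureTheory intervalIntegral in
/-- There is a constant `C > 0` such that for every `ε ∈ (0, 1/2]` and
every `A ∈ ℝ`, `∫_0^1 ε/((ε + |u − A|)√u) du ≤ C ε^{1/2} log(1/ε)`. -/
theorem elementary_square_root_log_estimate :
    ∃ C : ℝ, 0 < C ∧ ∀ ε ∈ Set.Ioc (0:ℝ) (1/2), ∀ A : ℝ,
      (∫ u in (0:ℝ)..1, ε / ((ε + |u - A|) * Real.sqrt u))
        ≤ C * Real.sqrt ε * Real.log (1 / ε) := by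
  refine ⟨8, by norm_num, ?_⟩
  rintro ε ⟨hε, hε2⟩ A
  have hε1 : ε ≤ 1 := le_trans hε2 (by norm_num)
  set f : ℝ → ℝ := fun u => ε / ((ε + |u - A|) * Real.sqrt u) with hf
  -- pointwise bound by u^{-1/2}
  have hptw : ∀ u : ℝ, 0 < u → f u ≤ u ^ (-(1/2) : ℝ) := by
    intro u hu
    have hsq : 0 < Real.sqrt u := Real.sqrt_pos.2 hu
    have hrw : u ^ (-(1/2) : ℝ) = (Real.sqrt u)⁻¹ := by
      rw [Real.rpow_neg hu.le, Real.sqrt_eq_rpow]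
    rw [hrw]
    calc f u ≤ ε / (ε * Real.sqrt u) := by
          apply div_le_div_of_nonneg_left hε.le (by positivity)
          gcongr
          exact le_add_of_nonneg_right (abs_nonneg _)
      _ = (Real.sqrt u)⁻¹ := by
          rw [div_mul_eq_div_div, div_self hε.ne', one_div]
  have hfnonneg : ∀ u : ℝ, 0 ≤ f u := by
    intro u
    apply div_nonneg hε.le
    apply mul_nonneg (by positivity) (Real.sqrt_nonneg u)
  have hmeas : AEStronglyMeasurable f volume := by
    apply Measurable.aestronglyMeasurable
    apply Measurable.div measurable_const
    exact (measurable_const.add ((measurable_id.sub measurable_const).abs)).mul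
      Real.continuous_sqrt.measurable
  have hrpowint : IntervalIntegrable (fun u : ℝ => u ^ (-(1/2) : ℝ)) volume 0 1 :=
    intervalIntegral.intervalIntegrable_rpow' (by norm_num)
  have hfint : IntervalIntegrable f volume 0 1 := by
    rw [intervalIntegrable_iff_integrableOn_Ioc_of_le (by norm_num : (0:ℝ) ≤ 1)]
    have hg : IntegrableOn (fun u : ℝ => u ^ (-(1/2) : ℝ)) (Set.Ioc 0 1) volume := by
      rwa [intervalIntegrable_iff_integrableOn_Ioc_of_le (by norm_num : (0:ℝ) ≤ 1)] at hrpowint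
    apply hg.mono' hmeas.restrict
    filter_upwards [ae_restrict_mem measurableSet_Ioc] with u hu
    rw [Real.norm_of_nonneg (hfnonneg u)]
    exact hptw u hu.1
  have hfint1 : IntervalIntegrable f volume 0 ε := by
    apply hfint.mono_set
    rw [Set.uIcc_of_le hε.le, Set.uIcc_of_le (by norm_num : (0:ℝ) ≤ 1)]
    exact Set.Icc_subset_Icc le_rfl hε1
  have hfint2 : IntervalIntegrable f volume ε 1 := by
    apply hfint.mono_set
    rw [Set.uIcc_of_le hε1, Set.uIcc_of_le (by norm_num : (0:ℝ) ≤ 1)]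
    exact Set.Icc_subset_Icc hε.le le_rfl
  have hsplit : (∫ u in (0:ℝ)..1, f u) = (∫ u in (0:ℝ)..ε, f u) + ∫ u in ε..1, f u :=
    (intervalIntegral.integral_add_adjacent_intervals hfint1 hfint2).symm
  -- Piece 1
  have h1 : (∫ u in (0:ℝ)..ε, f u) ≤ 2 * Real.sqrt ε := by
    have hmono : (∫ u in (0:ℝ)..ε, f u) ≤ ∫ u in (0:ℝ)..ε, u ^ (-(1/2) : ℝ) := by
      apply intervalIntegral.integral_mono_on hε.le hfint1
        (intervalIntegral.intervalIntegrable_rpow' (by norm_num))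
      intro u hu
      rcases eq_or_lt_of_le hu.1 with h0 | h0
      · rw [← h0]
        simp [hf, Real.zero_rpow (by norm_num : (-(1/2) : ℝ) ≠ 0), Real.sqrt_zero]
      · exact hptw u h0
    have hval : (∫ u in (0:ℝ)..ε, u ^ (-(1/2) : ℝ)) = 2 * Real.sqrt ε := by
      rw [integral_rpow (Or.inl (by norm_num : (-1:ℝ) < -(1/2)))]
      rw [Real.zero_rpow (by norm_num : (-(1/2) : ℝ) + 1 ≠ 0), Real.sqrt_eq_rpow]
      norm_num
      ring
    linarith
  -- Piece 2
  have hsqε : 0 < Real.sqrt ε := Real.sqrt_pos.2 hε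
  have h2 : (∫ u in ε..1, f u) ≤ (Real.sqrt ε)⁻¹ * (2 * (ε * Real.log (2 / ε))) := by
    have hcg : Continuous fun u : ℝ => ε / (ε + |u - A|) := by
      apply continuous_const.div (by fun_prop)
      intro x
      have : 0 < ε + |x - A| := by positivity
      exact this.ne'
    have hmono : (∫ u in ε..1, f u)
        ≤ ∫ u in ε..1, (Real.sqrt ε)⁻¹ * (ε / (ε + |u - A|)) := by
      apply intervalIntegral.integral_mono_on hε1 hfint2
        ((continuous_const.mul hcg).intervalIntegrable _ _)
      intro u hu
      have hsu : Real.sqrt ε ≤ Real.sqrt u := Real.sqrt_le_sqrt hu.1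
      have hsu0 : 0 < Real.sqrt u := lt_of_lt_of_le hsqε hsu
      have hden : 0 < ε + |u - A| := by positivity
      calc f u ≤ ε / ((ε + |u - A|) * Real.sqrt ε) := by
            apply div_le_div_of_nonneg_left hε.le (by positivity)
            gcongr
        _ = (Real.sqrt ε)⁻¹ * (ε / (ε + |u - A|)) := by
            rw [div_mul_eq_div_div]
            rw [div_eq_inv_mul (ε / (ε + |u - A|)) (Real.sqrt ε)]
    have hshift : (∫ u in ε..1, ε / (ε + |u - A|))
        = ∫ x in (ε - A)..(1 - A), ε / (ε + |x|) :=
      intervalIntegral.integral_comp_sub_right (fun x => ε / (ε + |x|)) A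
    have habs : (∫ x in (ε - A)..(1 - A), ε / (ε + |x|))
        ≤ 2 * ∫ x in (0:ℝ)..(1 - ε), ε / (ε + x) := by
      have := abs_int_le hε (a := ε - A) (b := 1 - A) (by linarith)
      have heq : 1 - A - (ε - A) = 1 - ε := by ring
      rwa [heq] at this
    have hval : (∫ x in (0:ℝ)..(1 - ε), ε / (ε + x)) ≤ ε * Real.log (2 / ε) :=
      val_le hε (by linarith) (by linarith)
    rw [intervalIntegral.integral_const_mul] at hmono
    have hfin : (∫ u in ε..1, ε / (ε + |u - A|)) ≤ 2 * (ε * Real.log (2 / ε)) := by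
      rw [hshift]; linarith
    calc (∫ u in ε..1, f u) ≤ (Real.sqrt ε)⁻¹ * ∫ u in ε..1, ε / (ε + |u - A|) := hmono
      _ ≤ (Real.sqrt ε)⁻¹ * (2 * (ε * Real.log (2 / ε))) := by
          apply mul_le_mul_of_nonneg_left hfin (by positivity)
  -- Arithmetic wrap-up
  have hεs : (Real.sqrt ε)⁻¹ * ε = Real.sqrt ε := by
    rw [← Real.mul_self_sqrt hε.le]
    field_simp
    rw [Real.sqrt_sq hsqε.le]
  have hlog2 : Real.log (2 / ε) = Real.log 2 + Real.log (1 / ε) := by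
    rw [Real.log_div (by norm_num) hε.ne', Real.log_div (by norm_num) hε.ne', Real.log_one]
    ring
  have hL2 : Real.log 2 ≤ Real.log (1 / ε) := by
    apply Real.log_le_log (by norm_num)
    rw [le_div_iff₀ hε]
    linarith
  have hlb : (0.6931471803 : ℝ) < Real.log 2 := Real.log_two_gt_d9
  have hub : Real.log 2 < 0.6931471808 := Real.log_two_lt_d9
  have hLpos : 0 < Real.log (1 / ε) := lt_of_lt_of_le (by linarith) hL2
  have h2' : (∫ u in ε..1, f u)
      ≤ 2 * Real.sqrt ε * (Real.log 2 + Real.log (1 / ε)) := by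
    calc (∫ u in ε..1, f u) ≤ (Real.sqrt ε)⁻¹ * (2 * (ε * Real.log (2 / ε))) := h2
      _ = 2 * ((Real.sqrt ε)⁻¹ * ε) * Real.log (2 / ε) := by ring
      _ = 2 * Real.sqrt ε * (Real.log 2 + Real.log (1 / ε)) := by rw [hεs, hlog2]
  have hsε1 : 0 ≤ Real.sqrt ε := hsqε.le
  rw [hsplit]
  nlinarith [mul_le_mul_of_nonneg_left hL2 (mul_nonneg (by norm_num : (0:ℝ) ≤ 2) hsε1),
    mul_pos hsqε hLpos, mul_le_mul_of_nonneg_right hub.le hsε1,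
    mul_le_mul_of_nonneg_left hL2 hsε1, mul_le_mul_of_nonneg_right hlb.le hsε1]
end
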